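/- Let D = [0,1]^d and let ξ = ξ(x,ω), x ∈ D, be a jointly measurable random field with almost surely continuous sample paths. Let Φ be an Orlicz function and Ψ an Orlicz function weaker than Φ, and suppose that γ(δ⃗) := ‖Ω(ξ, δ⃗)‖_Φ is finite for all δ⃗ ∈ [0,1]^d and γ(δ⃗) → 0 as ‖δ⃗‖ → 0. Then ξ is rectangle factorably continuous: there exist a non-negative random variable ν with ‖ν‖_Ψ = 1 and a non-random continuous function g : [0,1]^d → [0,∞) with g(δ⃗) → 0 as ‖δ⃗‖ → 0 such that, almost surely, Ω(ξ(·,ω), δ⃗) ≤ ν(ω) · g(δ⃗) for every δ⃗ ∈ [0,1]^d. -/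

import Mathlib

open MeasureTheory Filter Set
open scoped ENNReal NNReal

/-- The modulus of continuity `Δ(f, δ)` of a function `f` on a metric space. -/
noncomputable def modCont {X : Type*} [MetricSpace X] (f : X → ℝ) (δ : ℝ) : ℝ :=
  sSup {r : ℝ | ∃ x y : X, dist x y ≤ δ ∧ r = |f x - f y|}

/-- An Orlicz (Young) function: even, convex, continuous, strictly increasing on `[0,∞)`,
vanishing at `0`, and tending to `∞` at `∞`. -/
structure IsOrliczFunction (Φ : ℝ → ℝ) : Prop where
  even : ∀ u, Φ (-u) = Φ u
  nonneg : ∀ u, 0 ≤ Φ u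
  convexOn : ConvexOn ℝ Set.univ Φ
  continuous : Continuous Φ
  strictMonoOn : StrictMonoOn Φ (Set.Ici 0)
  map_zero : Φ 0 = 0
  tendsto_atTop : Filter.Tendsto Φ Filter.atTop Filter.atTop

/-- The `Δ₂` condition: `limsup_{u→∞} Φ(2u)/Φ(u) < ∞`. -/
def OrliczDelta2 (Φ : ℝ → ℝ) : Prop :=
  ∃ C : ℝ, ∀ᶠ u in Filter.atTop, Φ (2 * u) ≤ C * Φ u

/-- The Luxemburg norm of a random variable `ζ` with respect to the Orlicz function `Φ`,
with value `∞` when `ζ` belongs to no ball of the Orlicz space. -/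
noncomputable def luxNorm {Ω : Type*} [MeasurableSpace Ω] (P : Measure Ω)
    (Φ : ℝ → ℝ) (ζ : Ω → ℝ) : ℝ≥0∞ :=
  sInf {c : ℝ≥0∞ | 0 < c ∧ c ≠ ∞ ∧
    ∫⁻ ω, ENNReal.ofReal (Φ (|ζ ω| / c.toReal)) ∂P ≤ 1}

/-- A scaling function on `[0, D]`: continuous, non-negative, nondecreasing, vanishing at `0`. -/
def IsScalingFunction (g : ℝ → ℝ) (D : ℝ) : Prop :=
  ContinuousOn g (Set.Icc 0 D) ∧ (∀ δ ∈ Set.Icc 0 D, 0 ≤ g δ) ∧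
    MonotoneOn g (Set.Icc 0 D) ∧ g 0 = 0

/-- `Ψ` is weaker than `Φ` (`Ψ << Φ`): for every `v > 0`, `Ψ(uv)/Φ(u) → 0` as `u → ∞`. -/
def OrliczWeaker (Ψ Φ : ℝ → ℝ) : Prop :=
  ∀ v : ℝ, 0 < v →
    Filter.Tendsto (fun u => Ψ (u * v) / Φ u) Filter.atTop (nhds 0)

/-- The rectangle difference operator
`□[f](x,y) = Σ_{S ⊆ {1,…,d}} (-1)^{d - |S|} f(z^S)`, where `z^S_i = y_i` for `i ∈ S`
and `z^S_i = x_i` otherwise. -/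
noncomputable def boxDiff {d : ℕ} (f : (Fin d → ℝ) → ℝ) (x y : Fin d → ℝ) : ℝ :=
  ∑ S : Finset (Fin d), (-1 : ℝ) ^ (d - S.card) * f fun i => if i ∈ S then y i else x i

/-- The rectangle modulus of continuity `Ω(f, δ⃗)` of `f` on the cube `[0,1]^d`. -/
noncomputable def rectMod {d : ℕ} (f : (Fin d → ℝ) → ℝ) (δ : Fin d → ℝ) : ℝ :=
  sSup {r : ℝ | ∃ x y : Fin d → ℝ,
    x ∈ Set.Icc (0 : Fin d → ℝ) 1 ∧ y ∈ Set.Icc (0 : Fin d → ℝ) 1 ∧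
    (∀ i, |x i - y i| ≤ δ i) ∧ r = |boxDiff f x y|}

/-!
Choose scales `t n → 0` with `t 0 = 1` at which `‖Ω(ξ, (t n, …, t n))‖_Φ` is as small as needed, and
constants `M n` with `Ψ (w / M n) ≤ ε n (1 + Φ w)`, which exist because `Ψ ≪ Φ`. With
`c n ≈ ‖Ω(ξ, t n)‖_Φ M n` summable, the variables `Ω(ξ, t n) / c n` have `Ψ`-modulars at most
`2⁻ⁿ⁻²`, so their supremum has `Ψ`-modular at most `1/2` and, after normalisation, gives `ν`.
Since `Ω` is monotone in `δ`, `Ω(ξ, δ) ≤ c n ν` whenever `‖δ‖ ≤ t n`, and the continuous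
`g(δ) = ∑ c n min(1, ‖δ‖ / t (n + 1))` dominates `c n` as soon as `‖δ‖ ≥ t (n + 1)`.
-/

open Topology

section Orlicz

variable {Φ Ψ : ℝ → ℝ}

namespace IsOrliczFunction

lemma monotoneOn (hΨ : IsOrliczFunction Ψ) : MonotoneOn Ψ (Ici 0) :=
  hΨ.strictMonoOn.monotoneOn

lemma pos (hΦ : IsOrliczFunction Φ) {u : ℝ} (hu : 0 < u) : 0 < Φ u := by
  simpa [hΦ.map_zero] using hΦ.strictMonoOn self_mem_Ici hu.le hu

lemma exists_pos_le (hΨ : IsOrliczFunction Ψ) {ε : ℝ} (hε : 0 < ε) : ∃ s > 0, Ψ s ≤ ε := by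
  have hsmall : ∀ᶠ s in 𝓝[>] (0 : ℝ), Ψ s < ε :=
    nhdsWithin_le_nhds ((hΨ.continuous.tendsto' 0 0 hΨ.map_zero).eventually_lt_const hε)
  obtain ⟨s, hs, hs0⟩ := (hsmall.and self_mem_nhdsWithin).exists
  exact ⟨s, hs0, hs.le⟩

lemma bddAbove_range_of_le (hΨ : IsOrliczFunction Ψ) {ι : Type*} {x : ι → ℝ} {C : ℝ}
    (h : ∀ i, Ψ (x i) ≤ C) : BddAbove (range x) := by
  obtain ⟨K, hK, hK0⟩ :=
    ((hΨ.tendsto_atTop.eventually_gt_atTop C).and (eventually_ge_atTop 0)).exists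
  refine ⟨K, forall_mem_range.2 fun i => le_of_not_gt fun hi => ?_⟩
  exact (h i).not_gt (hK.trans (hΨ.strictMonoOn hK0 (mem_Ici.2 (hK0.trans hi.le)) hi))

lemma apply_ciSup_le (hΨ : IsOrliczFunction Ψ) {ι : Type*} [Nonempty ι] {x : ι → ℝ} {C : ℝ}
    (h : ∀ i, Ψ (x i) ≤ C) : Ψ (⨆ i, x i) ≤ C :=
  closure_minimal (range_subset_iff.2 h) (isClosed_le hΨ.continuous continuous_const)
    (csSup_mem_closure (range_nonempty x) (hΨ.bddAbove_range_of_le h))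

end IsOrliczFunction

/-- Small `w` are handled by continuity of `Ψ` at `0`, large ones by `Ψ ≪ Φ`. -/
lemma OrliczWeaker.exists_le_mul_one_add (hweak : OrliczWeaker Ψ Φ) (hΦ : IsOrliczFunction Φ)
    (hΨ : IsOrliczFunction Ψ) {ε : ℝ} (hε : 0 < ε) :
    ∃ M > 0, ∀ w ≥ 0, Ψ (w / M) ≤ ε * (1 + Φ w) := by
  obtain ⟨u, hu⟩ := (((hweak 1 one_pos).eventually_lt_const hε).and
    (eventually_gt_atTop 0)).exists_forall_of_atTop
  obtain ⟨s, hs, hΨs⟩ := hΨ.exists_pos_le hε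
  set M := max 1 (u / s)
  have hM : 0 < M := lt_max_of_lt_left one_pos
  refine ⟨M, hM, fun w hw => ?_⟩
  have hwM : 0 ≤ w / M := div_nonneg hw hM.le
  rcases le_or_gt w u with hwu | hwu
  · have hws : w / M ≤ s := by
      rw [div_le_iff₀ hM]
      calc w ≤ u := hwu
        _ ≤ s * (u / s) := by rw [mul_div_cancel₀ _ hs.ne']
        _ ≤ s * M := by gcongr; exact le_max_right _ _
    calc Ψ (w / M) ≤ Ψ s := hΨ.monotoneOn hwM hs.le hws
      _ ≤ ε := hΨs
      _ ≤ ε * (1 + Φ w) := le_mul_of_one_le_right hε.le (le_add_of_nonneg_right (hΦ.nonneg w))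
  · obtain ⟨hratio, hw0⟩ := hu w hwu.le
    rw [mul_one, div_lt_iff₀ (hΦ.pos hw0)] at hratio
    calc Ψ (w / M) ≤ Ψ w := hΨ.monotoneOn hwM hw (div_le_self hw (le_max_left _ _))
      _ ≤ ε * (1 + Φ w) := by nlinarith [hΦ.nonneg w]

end Orlicz

section Luxemburg

variable {Ω : Type*} [MeasurableSpace Ω] {P : Measure Ω} {Φ : ℝ → ℝ} {ζ ζ' : Ω → ℝ}

lemma luxNorm_congr_ae (h : ζ =ᵐ[P] ζ') : luxNorm P Φ ζ = luxNorm P Φ ζ' := by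
  have hint : ∀ c : ℝ≥0∞, ∫⁻ ω, ENNReal.ofReal (Φ (|ζ ω| / c.toReal)) ∂P =
      ∫⁻ ω, ENNReal.ofReal (Φ (|ζ' ω| / c.toReal)) ∂P :=
    fun c => lintegral_congr_ae (h.mono fun ω hω => by simp only [hω])
  simp only [luxNorm, hint]

lemma exists_lintegral_le_one_of_luxNorm_lt {e : ℝ≥0∞} (h : luxNorm P Φ ζ < e) :
    ∃ b : ℝ, 0 < b ∧ ENNReal.ofReal b < e ∧
      ∫⁻ ω, ENNReal.ofReal (Φ (|ζ ω| / b)) ∂P ≤ 1 := by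
  obtain ⟨c, ⟨hc0, hctop, hint⟩, hce⟩ := sInf_lt_iff.1 h
  exact ⟨c.toReal, ENNReal.toReal_pos hc0.ne' hctop, by rwa [ENNReal.ofReal_toReal hctop], hint⟩

lemma luxNorm_le_one (h : ∫⁻ ω, ENNReal.ofReal (Φ |ζ ω|) ∂P ≤ 1) : luxNorm P Φ ζ ≤ 1 :=
  sInf_le ⟨one_pos, ENNReal.one_ne_top, by simpa using h⟩

lemma luxNorm_pos_of_le [IsProbabilityMeasure P] (hΦ : IsOrliczFunction Φ) {κ : ℝ}
    (hκ : 0 < κ) (h : ∀ ω, κ ≤ |ζ ω|) : 0 < luxNorm P Φ ζ := by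
  obtain ⟨A, hA, hA0⟩ :=
    ((hΦ.tendsto_atTop.eventually_gt_atTop 1).and (eventually_gt_atTop 0)).exists
  refine (ENNReal.ofReal_pos.2 (div_pos hκ hA0)).trans_le (le_sInf ?_)
  rintro c ⟨hc0, hctop, hint⟩
  have hc : 0 < c.toReal := ENNReal.toReal_pos hc0.ne' hctop
  have hκc : Φ (κ / c.toReal) ≤ 1 := by
    refine ENNReal.ofReal_le_one.1 ?_
    calc ENNReal.ofReal (Φ (κ / c.toReal)) = ∫⁻ _, ENNReal.ofReal (Φ (κ / c.toReal)) ∂P := by simp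
      _ ≤ ∫⁻ ω, ENNReal.ofReal (Φ (|ζ ω| / c.toReal)) ∂P := lintegral_mono fun ω =>
          ENNReal.ofReal_le_ofReal (hΦ.monotoneOn (div_nonneg hκ.le hc.le)
            (div_nonneg (abs_nonneg _) hc.le) (div_le_div_of_nonneg_right (h ω) hc.le))
      _ ≤ 1 := hint
  have hκA : κ / c.toReal ≤ A := le_of_not_gt fun hlt =>
    hκc.not_gt (hA.trans (hΦ.strictMonoOn (mem_Ici.2 hA0.le) (mem_Ici.2 (hA0.trans hlt).le) hlt))
  exact (ENNReal.ofReal_le_iff_le_toReal hctop).2 ((div_le_comm₀ hA0 hc).2 hκA)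

lemma luxNorm_div {a : ℝ} (ha : 0 < a) :
    luxNorm P Φ (fun ω => ζ ω / a) = luxNorm P Φ ζ / ENNReal.ofReal a := by
  have hk : IsUnit (ENNReal.ofReal a) :=
    ENNReal.isUnit_iff.2 ⟨(ENNReal.ofReal_pos.2 ha).ne', ENNReal.ofReal_ne_top⟩
  set e := ENNReal.mulLeftOrderIso _ hk
  have hpre : {c : ℝ≥0∞ | 0 < c ∧ c ≠ ∞ ∧
      ∫⁻ ω, ENNReal.ofReal (Φ (|ζ ω / a| / c.toReal)) ∂P ≤ 1} =
      e ⁻¹' {c | 0 < c ∧ c ≠ ∞ ∧ ∫⁻ ω, ENNReal.ofReal (Φ (|ζ ω| / c.toReal)) ∂P ≤ 1} := by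
    ext c
    simp [e, ENNReal.toReal_mul, ENNReal.toReal_ofReal ha.le, abs_div, abs_of_pos ha, div_div,
      ENNReal.mul_eq_top, ha, ENNReal.ofReal_ne_top]
  rw [ENNReal.eq_div_iff hk.ne_zero ENNReal.ofReal_ne_top, luxNorm, luxNorm, hpre]
  exact (map_sInf e _).trans (congrArg sInf (e.image_preimage _))

end Luxemburg

section Normalization

variable {Ω : Type*} [MeasurableSpace Ω] {P : Measure Ω} [IsProbabilityMeasure P] {Ψ : ℝ → ℝ}

/-- Raising `ν₀` to a positive floor `κ` with `Ψ κ ≤ 1/2` makes its norm positive, and then the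
normalisation `ν₁ / ‖ν₁‖_Ψ` only increases it. -/
lemma exists_luxNorm_eq_one_ge (hΨ : IsOrliczFunction Ψ) {ν₀ : Ω → ℝ} (hmeas : Measurable ν₀)
    (hnn : ∀ ω, 0 ≤ ν₀ ω) (hmod : ∫⁻ ω, ENNReal.ofReal (Ψ (ν₀ ω)) ∂P ≤ 2⁻¹) :
    ∃ ν : Ω → ℝ, Measurable ν ∧ (∀ ω, 0 ≤ ν ω) ∧ luxNorm P Ψ ν = 1 ∧ ∀ ω, ν₀ ω ≤ ν ω := by
  obtain ⟨κ, hκ, hΨκ⟩ := hΨ.exists_pos_le (ε := 2⁻¹) (by norm_num)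
  set ν₁ := fun ω => max (ν₀ ω) κ
  have hν₁ : ∀ ω, 0 ≤ ν₁ ω := fun ω => hκ.le.trans (le_max_right _ _)
  have hmod₁ : ∫⁻ ω, ENNReal.ofReal (Ψ |ν₁ ω|) ∂P ≤ 1 := by
    have hpt : ∀ ω, ENNReal.ofReal (Ψ |ν₁ ω|) ≤
        ENNReal.ofReal (Ψ (ν₀ ω)) + ENNReal.ofReal (Ψ κ) := fun ω => by
      rw [abs_of_nonneg (hν₁ ω), ← ENNReal.ofReal_add (hΨ.nonneg _) (hΨ.nonneg _),
        hΨ.monotoneOn.map_max (hnn ω) hκ.le]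
      exact ENNReal.ofReal_le_ofReal (max_le (le_add_of_nonneg_right (hΨ.nonneg _))
        (le_add_of_nonneg_left (hΨ.nonneg _)))
    calc ∫⁻ ω, ENNReal.ofReal (Ψ |ν₁ ω|) ∂P
        ≤ ∫⁻ ω, (ENNReal.ofReal (Ψ (ν₀ ω)) + ENNReal.ofReal (Ψ κ)) ∂P := lintegral_mono hpt
      _ = ∫⁻ ω, ENNReal.ofReal (Ψ (ν₀ ω)) ∂P + ENNReal.ofReal (Ψ κ) := by
        rw [lintegral_add_right _ measurable_const, lintegral_const, measure_univ, mul_one]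
      _ ≤ 2⁻¹ + 2⁻¹ := by
        gcongr
        simpa [ENNReal.ofReal_inv_of_pos] using ENNReal.ofReal_le_ofReal hΨκ
      _ = 1 := ENNReal.inv_two_add_inv_two
  set L := luxNorm P Ψ ν₁
  have hL0 : 0 < L := luxNorm_pos_of_le hΨ hκ fun ω => (le_max_right _ _).trans (le_abs_self _)
  have hL1 : L ≤ 1 := luxNorm_le_one hmod₁
  have hLtop : L ≠ ∞ := ne_top_of_le_ne_top ENNReal.one_ne_top hL1
  have hLR : 0 < L.toReal := ENNReal.toReal_pos hL0.ne' hLtop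
  refine ⟨fun ω => ν₁ ω / L.toReal, (hmeas.max measurable_const).div_const _,
    fun ω => div_nonneg (hν₁ ω) hLR.le, ?_, fun ω => ?_⟩
  · rw [luxNorm_div hLR, ENNReal.ofReal_toReal hLtop, ENNReal.div_self hL0.ne' hLtop]
  · exact (le_max_left _ _).trans
      (le_div_self (hν₁ ω) hLR (ENNReal.toReal_le_of_le_ofReal zero_le_one (by simpa using hL1)))

/-- The factor is the pointwise supremum of the `X n`, whose `Ψ`-modular is at most the sum of
the modulars. -/
lemma exists_luxNorm_eq_one_forall_le (hΨ : IsOrliczFunction Ψ) {X : ℕ → Ω → ℝ}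
    (hX : ∀ n, Measurable (X n)) (hX0 : ∀ n ω, 0 ≤ X n ω)
    (hmod : ∑' n, ∫⁻ ω, ENNReal.ofReal (Ψ (X n ω)) ∂P ≤ 2⁻¹) :
    ∃ ν : Ω → ℝ, Measurable ν ∧ (∀ ω, 0 ≤ ν ω) ∧ luxNorm P Ψ ν = 1 ∧
      ∀ᵐ ω ∂P, ∀ n, X n ω ≤ ν ω := by
  set W : Ω → ℝ≥0∞ := fun ω => ∑' n, ENNReal.ofReal (Ψ (X n ω))
  have hmeasΨ : ∀ n, Measurable fun ω => ENNReal.ofReal (Ψ (X n ω)) := fun n =>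
    (hΨ.continuous.measurable.comp (hX n)).ennreal_ofReal
  have hW : ∫⁻ ω, W ω ∂P ≤ 2⁻¹ := by
    rwa [lintegral_tsum fun n => (hmeasΨ n).aemeasurable]
  have hWfin : ∀ᵐ ω ∂P, W ω ≠ ∞ :=
    (ae_lt_top (Measurable.tsum hmeasΨ) (ne_top_of_le_ne_top (by simp) hW)).mono
      fun _ h => h.ne
  have hle : ∀ ω, W ω ≠ ∞ → ∀ n, Ψ (X n ω) ≤ (W ω).toReal := fun ω hω n =>
    (ENNReal.ofReal_le_iff_le_toReal hω).1 (ENNReal.le_tsum n)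
  obtain ⟨ν, hν, hνnn, hνnorm, hge⟩ := exists_luxNorm_eq_one_ge hΨ (ν₀ := fun ω => ⨆ n, X n ω)
    (Measurable.iSup hX) (fun ω => Real.iSup_nonneg fun n => hX0 n ω) <|
    calc ∫⁻ ω, ENNReal.ofReal (Ψ (⨆ n, X n ω)) ∂P ≤ ∫⁻ ω, W ω ∂P :=
          lintegral_mono_ae <| hWfin.mono fun ω hω =>
            (ENNReal.ofReal_le_iff_le_toReal hω).2 (hΨ.apply_ciSup_le (hle ω hω))
      _ ≤ 2⁻¹ := hW
  exact ⟨ν, hν, hνnn, hνnorm, hWfin.mono fun ω hω n =>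
    (le_ciSup (hΨ.bddAbove_range_of_le (hle ω hω)) n).trans (hge ω)⟩

end Normalization

section Factorization

variable {Ω : Type*} [MeasurableSpace Ω] {P : Measure Ω} {Φ Ψ : ℝ → ℝ}

lemma lintegral_div_mul_le [IsProbabilityMeasure P] {ε M b : ℝ} {X : Ω → ℝ} (hε : 0 ≤ ε)
    (hM : ∀ w ≥ 0, Ψ (w / M) ≤ ε * (1 + Φ w)) (hb : 0 ≤ b)
    (hX : ∫⁻ ω, ENNReal.ofReal (Φ (|X ω| / b)) ∂P ≤ 1) :
    ∫⁻ ω, ENNReal.ofReal (Ψ (|X ω| / (b * M))) ∂P ≤ 2 * ENNReal.ofReal ε := by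
  have hpt : ∀ ω, ENNReal.ofReal (Ψ (|X ω| / (b * M))) ≤
      ENNReal.ofReal ε * (1 + ENNReal.ofReal (Φ (|X ω| / b))) := fun ω => by
    rw [← div_div]
    calc ENNReal.ofReal (Ψ (|X ω| / b / M)) ≤ ENNReal.ofReal (ε * (1 + Φ (|X ω| / b))) :=
          ENNReal.ofReal_le_ofReal (hM _ (div_nonneg (abs_nonneg _) hb))
      _ = ENNReal.ofReal ε * ENNReal.ofReal (1 + Φ (|X ω| / b)) := ENNReal.ofReal_mul hε
      _ ≤ ENNReal.ofReal ε * (1 + ENNReal.ofReal (Φ (|X ω| / b))) := by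
          gcongr
          exact ENNReal.ofReal_add_le.trans_eq (by rw [ENNReal.ofReal_one])
  calc ∫⁻ ω, ENNReal.ofReal (Ψ (|X ω| / (b * M))) ∂P
      ≤ ∫⁻ ω, ENNReal.ofReal ε * (1 + ENNReal.ofReal (Φ (|X ω| / b))) ∂P := lintegral_mono hpt
    _ = ENNReal.ofReal ε * (1 + ∫⁻ ω, ENNReal.ofReal (Φ (|X ω| / b)) ∂P) := by
      rw [lintegral_const_mul' _ _ ENNReal.ofReal_ne_top, lintegral_add_left measurable_const,
        lintegral_const, measure_univ, mul_one]
    _ ≤ ENNReal.ofReal ε * (1 + 1) := by gcongr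
    _ = 2 * ENNReal.ofReal ε := by rw [one_add_one_eq_two, mul_comm]

variable {Z : ℝ → Ω → ℝ}

/-- Only finiteness of the norm is available at `t 0 = 1`; this level makes every `r ≤ 1` lie
below some `t n`. -/
lemma exists_scales (hfin : luxNorm P Φ (Z 1) < ∞)
    (h0 : Tendsto (fun t => luxNorm P Φ (Z t)) (𝓝[>] 0) (𝓝 0)) {β : ℕ → ℝ}
    (hβ : ∀ n, 0 < β n) :
    ∃ t b : ℕ → ℝ, t 0 = 1 ∧ (∀ n, 0 < t n) ∧ Tendsto t atTop (𝓝 0) ∧ (∀ n, 0 < b n) ∧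
      (∀ n, b (n + 1) ≤ β (n + 1)) ∧
      ∀ n, ∫⁻ ω, ENNReal.ofReal (Φ (|Z (t n) ω| / b n)) ∂P ≤ 1 := by
  obtain ⟨b₀, hb₀, -, hint₀⟩ := exists_lintegral_le_one_of_luxNorm_lt hfin
  have hlevel : ∀ n, ∃ t ∈ Ioo 0 (2⁻¹ ^ n), ∃ b, 0 < b ∧ b < β n ∧
      ∫⁻ ω, ENNReal.ofReal (Φ (|Z t ω| / b)) ∂P ≤ 1 := fun n => by
    obtain ⟨t, hγ, ht⟩ := ((h0.eventually (gt_mem_nhds (ENNReal.ofReal_pos.2 (hβ n)))).and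
      (Ioo_mem_nhdsGT (pow_pos (inv_pos.2 (two_pos : (0 : ℝ) < 2)) n))).exists
    obtain ⟨b, hb, hbβ, hint⟩ := exists_lintegral_le_one_of_luxNorm_lt hγ
    exact ⟨t, ht, b, hb, (ENNReal.ofReal_lt_ofReal_iff (hβ n)).1 hbβ, hint⟩
  choose t ht b hb hbβ hint using hlevel
  refine ⟨fun n => if n = 0 then 1 else t n, fun n => if n = 0 then b₀ else b n, if_pos rfl,
    fun n => ?_, ?_, fun n => ?_, fun n => by simpa using (hbβ (n + 1)).le, fun n => ?_⟩
  · dsimp only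
    split_ifs
    exacts [one_pos, (ht n).1]
  · refine (tendsto_congr' (eventually_ne_atTop 0 |>.mono fun n hn => (if_neg hn).symm)).1 ?_
    exact squeeze_zero (fun n => (ht n).1.le) (fun n => (ht n).2.le)
      (tendsto_pow_atTop_nhds_zero_of_lt_one (by norm_num) (by norm_num))
  · dsimp only
    split_ifs
    exacts [hb₀, hb n]
  · dsimp only
    split_ifs
    exacts [hint₀, hint n]

theorem exists_factorization_of_tendsto_luxNorm [IsProbabilityMeasure P]
    (hΦ : IsOrliczFunction Φ) (hΨ : IsOrliczFunction Ψ) (hweak : OrliczWeaker Ψ Φ)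
    (hZ : ∀ t, Measurable (Z t)) (hZ0 : ∀ t ω, 0 ≤ Z t ω) (hfin : luxNorm P Φ (Z 1) < ∞)
    (h0 : Tendsto (fun t => luxNorm P Φ (Z t)) (𝓝[>] 0) (𝓝 0)) :
    ∃ (ν : Ω → ℝ) (t c : ℕ → ℝ), Measurable ν ∧ (∀ ω, 0 ≤ ν ω) ∧ luxNorm P Ψ ν = 1 ∧
      t 0 = 1 ∧ (∀ n, 0 < t n) ∧ Tendsto t atTop (𝓝 0) ∧ (∀ n, 0 ≤ c n) ∧ Summable c ∧
      ∀ᵐ ω ∂P, ∀ n, Z (t n) ω ≤ c n * ν ω := by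
  choose M hM0 hM using fun n : ℕ =>
    hweak.exists_le_mul_one_add hΦ hΨ (ε := 2⁻¹ ^ (n + 3)) (by positivity)
  obtain ⟨t, b, ht0, htpos, ht, hb, hbβ, hint⟩ :=
    exists_scales hfin h0 (β := fun n => 2⁻¹ ^ n / M n) fun n => div_pos (by positivity) (hM0 n)
  set c := fun n => b n * M n
  have hc : ∀ n, 0 < c n := fun n => mul_pos (hb n) (hM0 n)
  have hmod : ∀ n, ∫⁻ ω, ENNReal.ofReal (Ψ (Z (t n) ω / c n)) ∂P ≤ 2⁻¹ ^ (n + 2) := fun n => by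
    have h := lintegral_div_mul_le (by positivity) (hM n) (hb n).le (hint n)
    simp only [abs_of_nonneg (hZ0 _ _)] at h
    refine h.trans_eq ?_
    rw [ENNReal.ofReal_pow (by norm_num), ENNReal.ofReal_inv_of_pos two_pos, ENNReal.ofReal_ofNat,
      pow_succ, mul_comm, mul_assoc, ENNReal.inv_mul_cancel two_ne_zero ENNReal.ofNat_ne_top,
      mul_one]
  have hsum : ∑' n, (2⁻¹ : ℝ≥0∞) ^ (n + 2) = 2⁻¹ := by
    simp only [pow_add, ENNReal.tsum_mul_right, ENNReal.tsum_geometric_two]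
    rw [pow_two, ← mul_assoc, ENNReal.mul_inv_cancel two_ne_zero ENNReal.ofNat_ne_top, one_mul]
  obtain ⟨ν, hν, hνnn, hνnorm, hle⟩ := exists_luxNorm_eq_one_forall_le hΨ
    (X := fun n ω => Z (t n) ω / c n) (fun n => (hZ _).div_const _)
    (fun n ω => div_nonneg (hZ0 _ _) (hc n).le) ((ENNReal.tsum_le_tsum hmod).trans_eq hsum)
  have hcle : ∀ n, c (n + 1) ≤ 2⁻¹ ^ (n + 1) := fun n =>
    (mul_le_mul_of_nonneg_right (hbβ n) (hM0 _).le).trans_eq (div_mul_cancel₀ _ (hM0 _).ne')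
  refine ⟨ν, t, c, hν, hνnn, hνnorm, ht0, htpos, ht, fun n => (hc n).le, ?_,
    hle.mono fun ω h n => (div_le_iff₀' (hc n)).1 (h n)⟩
  refine (summable_nat_add_iff 1).1 (Summable.of_nonneg_of_le (fun n => (hc _).le) hcle ?_)
  exact (summable_nat_add_iff 1).2 (summable_geometric_of_lt_one (by norm_num) (by norm_num))

end Factorization

/-- The deterministic factor `g` of the theorem is `δ ↦ rampSum c t ‖δ‖`. -/
noncomputable def rampSum (c t : ℕ → ℝ) (r : ℝ) : ℝ :=
  ∑' n, c n * min 1 (r / t (n + 1))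

section Ramp

variable {c t : ℕ → ℝ}

lemma rampSum_zero : rampSum c t 0 = 0 := by
  simp [rampSum]

lemma ramp_mem_Icc (ht : ∀ n, 0 < t n) (hc : ∀ n, 0 ≤ c n) (n : ℕ) {r : ℝ} (hr : 0 ≤ r) :
    c n * min 1 (r / t (n + 1)) ∈ Icc 0 (c n) :=
  ⟨mul_nonneg (hc n) (le_min zero_le_one (div_nonneg hr (ht _).le)),
    mul_le_of_le_one_right (hc n) (min_le_left _ _)⟩

lemma rampSum_nonneg (ht : ∀ n, 0 < t n) (hc : ∀ n, 0 ≤ c n) {r : ℝ} (hr : 0 ≤ r) :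
    0 ≤ rampSum c t r :=
  tsum_nonneg fun n => (ramp_mem_Icc ht hc n hr).1

lemma continuousOn_rampSum (ht : ∀ n, 0 < t n) (hc : ∀ n, 0 ≤ c n) (hcs : Summable c) :
    ContinuousOn (rampSum c t) (Ici 0) := by
  refine continuousOn_tsum (fun n => continuousOn_const.mul
    (continuousOn_const.inf (continuousOn_id.div_const _))) hcs fun n r hr => ?_
  have h := ramp_mem_Icc ht hc n hr
  rw [Real.norm_eq_abs, abs_of_nonneg h.1]
  exact h.2

lemma le_rampSum (ht : ∀ n, 0 < t n) (hc : ∀ n, 0 ≤ c n) (hcs : Summable c) {n : ℕ} {r : ℝ}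
    (hr : t (n + 1) ≤ r) : c n ≤ rampSum c t r := by
  have hr0 : 0 ≤ r := (ht _).le.trans hr
  have hn : c n * min 1 (r / t (n + 1)) = c n := by
    rw [min_eq_left ((one_le_div (ht _)).2 hr), mul_one]
  rw [← hn]
  exact (hcs.of_nonneg_of_le (fun m => (ramp_mem_Icc ht hc m hr0).1)
    fun m => (ramp_mem_Icc ht hc m hr0).2).le_tsum n fun m _ => (ramp_mem_Icc ht hc m hr0).1

lemma exists_le_and_lt_succ (ht : Tendsto t atTop (𝓝 0)) {r : ℝ} (hr : 0 < r)
    (hr0 : r ≤ t 0) : ∃ n, r ≤ t n ∧ t (n + 1) < r := by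
  by_contra! H
  obtain ⟨n, hn⟩ := (ht.eventually (gt_mem_nhds hr)).exists
  exact (Nat.rec hr0 (fun m ih => H m ih) n : r ≤ t n).not_gt hn

lemma le_mul_rampSum (ht : ∀ n, 0 < t n) (ht0 : Tendsto t atTop (𝓝 0)) (hc : ∀ n, 0 ≤ c n)
    (hcs : Summable c) {r v z : ℝ} (hr : 0 ≤ r) (hrt : r ≤ t 0) (hv : 0 ≤ v)
    (hz : ∀ n, r ≤ t n → z ≤ c n * v) : z ≤ v * rampSum c t r := by
  rcases hr.eq_or_lt with rfl | hr
  · rw [rampSum_zero, mul_zero]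
    exact ge_of_tendsto' (by simpa using hcs.tendsto_atTop_zero.mul_const v)
      fun n => hz n (ht n).le
  · obtain ⟨n, hn, hn1⟩ := exists_le_and_lt_succ ht0 hr hrt
    calc z ≤ c n * v := hz n hn
      _ ≤ rampSum c t r * v := mul_le_mul_of_nonneg_right (le_rampSum ht hc hcs hn1.le) hv
      _ = v * rampSum c t r := mul_comm _ _

end Ramp

lemma csSup_image_eq_of_subset_closure {X : Type*} [TopologicalSpace X] {F : X → ℝ}
    {A T : Set X} (hF : ContinuousOn F A) (hTA : T ⊆ A) (hAT : A ⊆ closure T)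
    (hbdd : BddAbove (F '' A)) : sSup (F '' A) = sSup (F '' T) := by
  rcases T.eq_empty_or_nonempty with rfl | hT
  · rw [closure_empty, subset_empty_iff] at hAT
    rw [hAT]
  refine le_antisymm (csSup_le ((hT.mono hTA).image F) ?_)
    (csSup_le_csSup hbdd (hT.image F) (image_mono hTA))
  rintro _ ⟨a, ha, rfl⟩
  exact isClosed_Iic.closure_subset_iff.2 (fun y hy => le_csSup (hbdd.mono (image_mono hTA)) hy)
    (((hF a ha).mono hTA).mem_closure_image (hAT ha))

section Rectangle

variable {d : ℕ}

lemma norm_le_one_of_mem_Icc {δ : Fin d → ℝ} (hδ : δ ∈ Icc 0 1) : ‖δ‖ ≤ 1 :=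
  (pi_norm_le_iff_of_nonneg zero_le_one).2 fun i => by
    rw [Real.norm_of_nonneg (hδ.1 i)]
    exact hδ.2 i

lemma tendsto_diag_nhdsGT_zero :
    Tendsto (fun t : ℝ => fun _ : Fin d => t) (𝓝[>] 0) (𝓝[Icc 0 1] 0) :=
  tendsto_nhdsWithin_iff.2 ⟨((continuous_pi fun _ => continuous_id).tendsto' 0 0 rfl).mono_left
    nhdsWithin_le_nhds, mem_of_superset (Ioc_mem_nhdsGT one_pos) fun _ ht =>
      ⟨fun _ => ht.1.le, fun _ => ht.2⟩⟩

def rectPairs (d : ℕ) (δ : Fin d → ℝ) : Set ((Fin d → ℝ) × (Fin d → ℝ)) :=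
  {p | p.1 ∈ Icc 0 1 ∧ p.2 ∈ Icc 0 1 ∧ ∀ i, |p.1 i - p.2 i| ≤ δ i}

lemma rectMod_eq_sSup_image (f : (Fin d → ℝ) → ℝ) (δ : Fin d → ℝ) :
    rectMod f δ = sSup ((fun p => |boxDiff f p.1 p.2|) '' rectPairs d δ) := by
  simp only [rectMod, rectPairs, image, mem_ofPred_eq, Prod.exists, and_assoc, eq_comm]

lemma rectPairs_subset (δ : Fin d → ℝ) : rectPairs d δ ⊆ Icc 0 1 ×ˢ Icc 0 1 :=
  fun _ hp => ⟨hp.1, hp.2.1⟩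

lemma rectPairs_mono {δ δ' : Fin d → ℝ} (h : δ ≤ δ') : rectPairs d δ ⊆ rectPairs d δ' :=
  fun _ ⟨hx, hy, hxy⟩ => ⟨hx, hy, fun i => (hxy i).trans (h i)⟩

lemma rectPairs_nonempty {δ : Fin d → ℝ} (hδ : 0 ≤ δ) : (rectPairs d δ).Nonempty :=
  ⟨(0, 0), left_mem_Icc.2 zero_le_one, left_mem_Icc.2 zero_le_one, fun i => by simpa using hδ i⟩

lemma continuousOn_boxDiff {f : (Fin d → ℝ) → ℝ} (hf : ContinuousOn f (Icc 0 1)) :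
    ContinuousOn (fun p : (Fin d → ℝ) × (Fin d → ℝ) => boxDiff f p.1 p.2) (Icc 0 1 ×ˢ Icc 0 1) := by
  refine continuousOn_finsetSum _ fun S _ => continuousOn_const.mul
    (hf.comp (Continuous.continuousOn (continuous_pi fun i => ?_)) fun p hp => ?_)
  · split_ifs <;> fun_prop
  · constructor <;> intro i <;> dsimp only <;> split_ifs
    exacts [hp.2.1 i, hp.1.1 i, hp.2.2 i, hp.1.2 i]

lemma bddAbove_image_abs_boxDiff {f : (Fin d → ℝ) → ℝ} (hf : ContinuousOn f (Icc 0 1))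
    (δ : Fin d → ℝ) : BddAbove ((fun p => |boxDiff f p.1 p.2|) '' rectPairs d δ) :=
  ((isCompact_Icc.prod isCompact_Icc).bddAbove_image (continuousOn_boxDiff hf).abs).mono
    (image_mono (rectPairs_subset δ))

lemma rectMod_mono {f : (Fin d → ℝ) → ℝ} (hf : ContinuousOn f (Icc 0 1)) {δ δ' : Fin d → ℝ}
    (hδ : 0 ≤ δ) (h : δ ≤ δ') : rectMod f δ ≤ rectMod f δ' := by
  rw [rectMod_eq_sSup_image, rectMod_eq_sSup_image]
  exact csSup_le_csSup (bddAbove_image_abs_boxDiff hf δ') ((rectPairs_nonempty hδ).image _)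
    (image_mono (rectPairs_mono h))

/-- On continuous paths the supremum defining `rectMod` may be taken over a countable dense set
of pairs, which makes it measurable. -/
lemma exists_measurable_ae_eq_rectMod {Ω : Type*} [MeasurableSpace Ω] {P : Measure Ω}
    {ξ : (Fin d → ℝ) → Ω → ℝ} (hmeas : ∀ x, Measurable (ξ x))
    (hcont : ∀ᵐ ω ∂P, ContinuousOn (fun x => ξ x ω) (Icc 0 1)) (δ : Fin d → ℝ) :
    ∃ ρ : Ω → ℝ, Measurable ρ ∧ (∀ ω, 0 ≤ ρ ω) ∧
      ρ =ᵐ[P] fun ω => rectMod (fun x => ξ x ω) δ := by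
  obtain ⟨T, hTA, hTc, hAT⟩ :=
    (TopologicalSpace.IsSeparable.of_separableSpace (rectPairs d δ)).exists_countable_dense_subset
  have := hTc.to_subtype
  refine ⟨fun ω => ⨆ p : T, |boxDiff (fun x => ξ x ω) p.1.1 p.1.2|,
    Measurable.iSup fun p => (Finset.measurable_sum _ fun S _ =>
      measurable_const.mul (hmeas _)).abs,
    fun ω => Real.iSup_nonneg fun _ => abs_nonneg _, hcont.mono fun ω hω => ?_⟩
  dsimp only
  rw [rectMod_eq_sSup_image, csSup_image_eq_of_subset_closure
    ((continuousOn_boxDiff hω).abs.mono (rectPairs_subset δ)) hTA hAT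
    (bddAbove_image_abs_boxDiff hω δ), sSup_image']

end Rectangle

/-- rectangle factorable continuity of a random field on `[0,1]^d`:
if `γ(δ⃗) = ‖Ω(ξ,δ⃗)‖_Φ` is finite and tends to `0`, then `Ω(ξ(·,ω), δ⃗) ≤ ν(ω) · g(δ⃗)`
with `‖ν‖_Ψ = 1` for any Orlicz function `Ψ` weaker than `Φ`. -/
theorem rectangle_factorable_continuity
    {Ω' : Type*} [MeasurableSpace Ω'] (P : Measure Ω') [IsProbabilityMeasure P]
    (d : ℕ) (ξ : (Fin d → ℝ) → Ω' → ℝ)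
    (hmeas : Measurable fun z : (Fin d → ℝ) × Ω' => ξ z.1 z.2)
    (hcont : ∀ᵐ ω ∂P, ContinuousOn (fun x => ξ x ω) (Set.Icc (0 : Fin d → ℝ) 1))
    (Φ Ψ : ℝ → ℝ) (hΦ : IsOrliczFunction Φ) (hΨ : IsOrliczFunction Ψ)
    (hweak : OrliczWeaker Ψ Φ)
    (hγfin : ∀ δ ∈ Set.Icc (0 : Fin d → ℝ) 1,
      luxNorm P Φ (fun ω => rectMod (fun x => ξ x ω) δ) < ∞)
    (hγ0 : Filter.Tendsto
      (fun δ : Fin d → ℝ => luxNorm P Φ (fun ω => rectMod (fun x => ξ x ω) δ))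
      (nhdsWithin 0 (Set.Icc (0 : Fin d → ℝ) 1)) (nhds 0)) :
    ∃ (ν : Ω' → ℝ) (g : (Fin d → ℝ) → ℝ),
      Measurable ν ∧ (∀ ω, 0 ≤ ν ω) ∧ luxNorm P Ψ ν = 1 ∧
      ContinuousOn g (Set.Icc (0 : Fin d → ℝ) 1) ∧
      (∀ δ ∈ Set.Icc (0 : Fin d → ℝ) 1, 0 ≤ g δ) ∧
      Filter.Tendsto g (nhdsWithin 0 (Set.Icc (0 : Fin d → ℝ) 1)) (nhds 0) ∧
      ∀ᵐ ω ∂P, ∀ δ ∈ Set.Icc (0 : Fin d → ℝ) 1,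
        rectMod (fun x => ξ x ω) δ ≤ ν ω * g δ := by
  choose ρ hρ hρ0 hρξ using
    exists_measurable_ae_eq_rectMod (fun x => hmeas.comp measurable_prodMk_left) hcont
  have hγρ : ∀ δ, luxNorm P Φ (ρ δ) = luxNorm P Φ (fun ω => rectMod (fun x => ξ x ω) δ) :=
    fun δ => luxNorm_congr_ae (hρξ δ)
  obtain ⟨ν, t, c, hν, hν0, hνnorm, ht0, ht, htlim, hc, hcs, hdom⟩ :=
    exists_factorization_of_tendsto_luxNorm hΦ hΨ hweak (Z := fun t => ρ fun _ => t)
      (fun _ => hρ _) (fun _ => hρ0 _)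
      (by rw [hγρ]; exact hγfin _ ⟨fun _ => zero_le_one, le_rfl⟩)
      (by simp only [hγρ]; exact hγ0.comp tendsto_diag_nhdsGT_zero)
  have hg : Continuous fun δ : Fin d → ℝ => rampSum c t ‖δ‖ :=
    (continuousOn_rampSum ht hc hcs).comp_continuous continuous_norm norm_nonneg
  refine ⟨ν, fun δ => rampSum c t ‖δ‖, hν, hν0, hνnorm, hg.continuousOn,
    fun δ _ => rampSum_nonneg ht hc (norm_nonneg δ), ?_, ?_⟩
  · simpa [rampSum_zero] using (hg.tendsto 0).mono_left nhdsWithin_le_nhds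
  filter_upwards [hcont, hdom, ae_all_iff.2 fun n => hρξ fun _ => t n] with ω hω hdomω hρω δ hδ
  refine le_mul_rampSum ht htlim hc hcs (norm_nonneg δ) (ht0 ▸ norm_le_one_of_mem_Icc hδ) (hν0 ω)
    fun n hn => ?_
  calc rectMod (fun x => ξ x ω) δ ≤ rectMod (fun x => ξ x ω) fun _ => t n :=
        rectMod_mono hω hδ.1 fun i => (Real.le_norm_self _).trans ((norm_le_pi_norm δ i).trans hn)
    _ = ρ (fun _ => t n) ω := (hρω n).symm
    _ ≤ c n * ν ω := hdomω n
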